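/- arXiv:2401.04129 — 7 statements merged into one kernel-verified Lean document; each statement's English description precedes it below -/
import Mathlib

section
/- Under the assumptions $1<p<N$, $0<\mu<N-p$, $\frac{\mu}{p}\le\frac{s}{r}<\frac{\mu}{p}+1$ with $r=\frac{p(N-s)}{N-p-\mu}$, one has $0<\left(\frac{p-s+\mu}{p}\right)^2\left[\frac{p(N-s)}{p-s+\mu}-1\right]<N-1$. In particular, setting $\varsigma=p/(p-s+\mu)$ and $K=\frac{p(N-s)}{p-s+\mu}$, for every integer $k\ge 1$ the eigenvalue $\lambda_k=k(N-2+k)$ of $-\Delta_{\mathbb{S}^{N-1}}$ satisfies $\varsigma^2\lambda_k>K-1$. -/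
/-! With `t = p - s + μ`, the two conditions on `s / r` say exactly `μ N ≤ s (N - p)` and
`s < μ + p`; the first gives `t (N - p) ≤ p (N - p - μ)`. Now `(t / p)² (K - 1)` is
`t (p (N - s) - t) / p²`, and `(N - p)²` times this numerator equals
`p (N - p - μ) (N - p) X + (p - 1) X²` with `X = t (N - p)`, which is increasing in `X ≥ 0`.
At `X = p (N - p - μ)` it is `p² (N - p - μ)² (N - 1) < p² (N - p)² (N - 1)`.
Finally `λ_k ≥ λ_1 = N - 1` and `K - 1 = ς² (t / p)² (K - 1)`. -/

namespace CKN

/-- The paper's exponent `r`. -/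
noncomputable def exponent (N p μ s : ℝ) : ℝ := p * (N - s) / (N - p - μ)

variable {N p μ s : ℝ}

theorem exponent_pos (hp : 0 < p) (hμN : μ < N - p) (hsN : s < N) : 0 < exponent N p μ s :=
  div_pos (mul_pos hp (sub_pos.mpr hsN)) (by linarith)

theorem lt_of_le_div_exponent (hp : 0 < p) (hμ : 0 < μ) (hμN : μ < N - p)
    (hs : μ / p ≤ s / exponent N p μ s) : s < N := by
  by_contra! hNs
  have hr : exponent N p μ s ≤ 0 :=
    div_nonpos_of_nonpos_of_nonneg (mul_nonpos_of_nonneg_of_nonpos hp.le (by linarith))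
      (by linarith)
  have : s / exponent N p μ s ≤ 0 := div_nonpos_of_nonneg_of_nonpos (by linarith) hr
  linarith [div_pos hμ hp]

theorem le_div_exponent_iff (hp : 0 < p) (hμN : μ < N - p) (hsN : s < N) :
    μ / p ≤ s / exponent N p μ s ↔ μ * N ≤ s * (N - p) := by
  have hA : 0 < N - p - μ := by linarith
  have hdiff : s * p * (N - p - μ) - μ * (p * (N - s)) = p * (s * (N - p) - μ * N) := by ring
  rw [div_le_div_iff₀ hp (exponent_pos hp hμN hsN), exponent, mul_div_assoc', div_le_iff₀ hA,
    ← sub_nonneg, hdiff, mul_nonneg_iff_of_pos_left hp, sub_nonneg]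

theorem div_exponent_lt_iff (hp : 0 < p) (hμ : 0 < μ) (hμN : μ < N - p) (hsN : s < N) :
    s / exponent N p μ s < μ / p + 1 ↔ s < μ + p := by
  have hA : 0 < N - p - μ := by linarith
  have hdiff : (μ + p) * (p * (N - s)) - s * p * (N - p - μ) = p * N * (μ + p - s) := by ring
  rw [div_add_one hp.ne', div_lt_div_iff₀ (exponent_pos hp hμN hsN) hp, exponent, mul_div_assoc',
    lt_div_iff₀ hA, ← sub_pos, hdiff, mul_pos_iff_of_pos_left (mul_pos hp (by linarith)), sub_pos]

theorem mul_sub_lt_sq_mul_sub_one (hp : 1 ≤ p) (hμ : 0 < μ) (hμN : μ < N - p)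
    (ht : 0 < p - s + μ) (hs : μ * N ≤ s * (N - p)) :
    (p - s + μ) * (p * (N - s) - (p - s + μ)) < p ^ 2 * (N - 1) := by
  set X := (p - s + μ) * (N - p)
  set c := p * (N - p - μ)
  have ha : 0 < N - p := by linarith
  have hX : 0 ≤ X := (mul_pos ht ha).le
  have hXc : X ≤ c := by simp only [X, c]; linarith
  have hc : c < p * (N - p) := mul_lt_mul_of_pos_left (by linarith) (by linarith)
  refine lt_of_mul_lt_mul_right ?_ (sq_nonneg (N - p))
  calc (p - s + μ) * (p * (N - s) - (p - s + μ)) * (N - p) ^ 2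
      = c * (N - p) * X + (p - 1) * X ^ 2 := by ring
    _ ≤ c * (N - p) * c + (p - 1) * c ^ 2 := by gcongr
    _ = c ^ 2 * (N - 1) := by ring
    _ < (p * (N - p)) ^ 2 * (N - 1) := by gcongr; linarith
    _ = p ^ 2 * (N - 1) * (N - p) ^ 2 := by ring

theorem sq_div_mul_div_sub_one_bounds (hp : 1 < p) (hμ : 0 < μ) (hμN : μ < N - p)
    (hsN : s < N) (ht : 0 < p - s + μ) (hs : μ * N ≤ s * (N - p)) :
    0 < ((p - s + μ) / p) ^ 2 * (p * (N - s) / (p - s + μ) - 1) ∧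
      ((p - s + μ) / p) ^ 2 * (p * (N - s) / (p - s + μ) - 1) < N - 1 := by
  have hp0 : 0 < p := by linarith
  have hQ : ((p - s + μ) / p) ^ 2 * (p * (N - s) / (p - s + μ) - 1)
      = (p - s + μ) * (p * (N - s) - (p - s + μ)) / p ^ 2 := by
    field_simp
  have hK : p - s + μ < p * (N - s) := by nlinarith
  rw [hQ, div_lt_iff₀ (by positivity), mul_comm (N - 1)]
  exact ⟨div_pos (mul_pos ht (by linarith)) (by positivity),
    mul_sub_lt_sq_mul_sub_one hp.le hμ hμN ht hs⟩

end CKN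

theorem sub_one_le_mul_sub_two_add {N : ℝ} (hN : 0 ≤ N) {k : ℕ} (hk : 1 ≤ k) :
    N - 1 ≤ k * (N - 2 + k) := by
  have hk' : (1 : ℝ) ≤ k := by exact_mod_cast hk
  nlinarith

theorem ckn_spherical_eigenvalue_bound_general (N : ℕ) (p μ s : ℝ)
    (hp1 : 1 < p)
    (hμ0 : 0 < μ) (hμ : μ < (N : ℝ) - p)
    (hs1 : μ / p ≤ s / (p * ((N : ℝ) - s) / ((N : ℝ) - p - μ)))
    (hs2 : s / (p * ((N : ℝ) - s) / ((N : ℝ) - p - μ)) < μ / p + 1) :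
    (0 < ((p - s + μ) / p) ^ 2 * (p * ((N : ℝ) - s) / (p - s + μ) - 1) ∧
      ((p - s + μ) / p) ^ 2 * (p * ((N : ℝ) - s) / (p - s + μ) - 1) < (N : ℝ) - 1) ∧
    ∀ k : ℕ, 1 ≤ k →
      (p / (p - s + μ)) ^ 2 * ((k : ℝ) * ((N : ℝ) - 2 + (k : ℝ)))
        > p * ((N : ℝ) - s) / (p - s + μ) - 1 := by
  have hp0 : 0 < p := by linarith
  have hsN : s < N := CKN.lt_of_le_div_exponent hp0 hμ0 hμ hs1
  have hlow := (CKN.le_div_exponent_iff hp0 hμ hsN).mp hs1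
  have ht : 0 < p - s + μ := by linarith [(CKN.div_exponent_lt_iff hp0 hμ0 hμ hsN).mp hs2]
  obtain ⟨hQpos, hQlt⟩ := CKN.sq_div_mul_div_sub_one_bounds hp1 hμ0 hμ hsN ht hlow
  refine ⟨⟨hQpos, hQlt⟩, fun k hk => ?_⟩
  calc p * ((N : ℝ) - s) / (p - s + μ) - 1
      = (p / (p - s + μ)) ^ 2 * (((p - s + μ) / p) ^ 2 * (p * (N - s) / (p - s + μ) - 1)) := by
        field_simp
    _ < (p / (p - s + μ)) ^ 2 * ((k : ℝ) * ((N : ℝ) - 2 + (k : ℝ))) :=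
      mul_lt_mul_of_pos_left (hQlt.trans_le (sub_one_le_mul_sub_two_add (Nat.cast_nonneg N) hk))
        (by positivity)

theorem ckn_spherical_eigenvalue_bound (N : ℕ) (p μ s : ℝ)
    (hN : 2 ≤ N) (hp1 : 1 < p) (hpN : p < (N : ℝ))
    (hμ0 : 0 < μ) (hμ : μ < (N : ℝ) - p)
    (hs1 : μ / p ≤ s / (p * ((N : ℝ) - s) / ((N : ℝ) - p - μ)))
    (hs2 : s / (p * ((N : ℝ) - s) / ((N : ℝ) - p - μ)) < μ / p + 1) :
    (0 < ((p - s + μ) / p) ^ 2 * (p * ((N : ℝ) - s) / (p - s + μ) - 1) ∧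
      ((p - s + μ) / p) ^ 2 * (p * ((N : ℝ) - s) / (p - s + μ) - 1) < (N : ℝ) - 1) ∧
    ∀ k : ℕ, 1 ≤ k →
      (p / (p - s + μ)) ^ 2 * ((k : ℝ) * ((N : ℝ) - 2 + (k : ℝ)))
        > p * ((N : ℝ) - s) / (p - s + μ) - 1 :=
  ckn_spherical_eigenvalue_bound_general N p μ s hp1 hμ0 hμ hs1 hs2
end

section
/- Let $1<p<2$ and $\tilde\omega:\mathbb{R}^N\times\mathbb{R}^N\to\mathbb{R}^N$ be defined by $\tilde\omega(x,x+y)=\big(\frac{|x+y|}{(2-p)|x+y|+(p-1)|x|}\big)^{1/(p-2)}x$ if $|x|<|x+y|$ and $\tilde\omega(x,x+y)=x$ if $|x+y|\le|x|$. Then for all $x\ne 0$ and all $y\in\mathbb{R}^N$, $|x|^{p-2}|y|^2+(p-2)|\tilde\omega(x,x+y)|^{p-2}(|x|-|x+y|)^2\ge 0$. -/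
/-!
The weight is chosen so that `(2 - p) |ω̃|^(p-2) ≤ |x|^(p-2)`: if `|x| < |x + y|` then
`|ω̃|^(p-2) = |x|^(p-2) |x+y| / ((2-p)|x+y| + (p-1)|x|)`, and otherwise `ω̃ = x` with `2 - p ≤ 1`.
Since `(|x| - |x + y|)² ≤ |y|²`, the negative term is dominated by the positive one.
-/

open Real

section TildeOmega

variable {E : Type*} [NormedAddCommGroup E] [NormedSpace ℝ E]

noncomputable def tildeOmega (p : ℝ) (x z : E) : E :=
  if ‖x‖ < ‖z‖ then ((‖z‖ / ((2 - p) * ‖z‖ + (p - 1) * ‖x‖)) ^ ((1 : ℝ) / (p - 2))) • x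
  else x

theorem norm_rpow_one_div_smul_rpow {t q : ℝ} (ht : 0 ≤ t) (hq : q ≠ 0) (x : E) :
    ‖(t ^ (1 / q)) • x‖ ^ q = t * ‖x‖ ^ q := by
  rw [norm_smul_of_nonneg (rpow_nonneg ht _), mul_rpow (rpow_nonneg ht _) (norm_nonneg x),
    ← rpow_mul ht, one_div_mul_cancel hq, rpow_one]

theorem two_sub_mul_norm_tildeOmega_rpow_le {p : ℝ} (hp1 : 1 ≤ p) (hp2 : p < 2) (x z : E) :
    (2 - p) * ‖tildeOmega p x z‖ ^ (p - 2) ≤ ‖x‖ ^ (p - 2) := by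
  have hx : 0 ≤ ‖x‖ ^ (p - 2) := rpow_nonneg (norm_nonneg x) _
  unfold tildeOmega
  split_ifs
  · have hu : 0 ≤ (2 - p) * ‖z‖ := mul_nonneg (by linarith) (norm_nonneg z)
    have hv : 0 ≤ (p - 1) * ‖x‖ := mul_nonneg (by linarith) (norm_nonneg x)
    have hratio : (2 - p) * ‖z‖ / ((2 - p) * ‖z‖ + (p - 1) * ‖x‖) ≤ 1 :=
      div_le_one_of_le₀ (by linarith) (by linarith)
    rw [norm_rpow_one_div_smul_rpow (div_nonneg (norm_nonneg z) (by linarith)) (by linarith),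
      ← mul_assoc, mul_div_assoc']
    exact mul_le_of_le_one_left hx hratio
  · exact mul_le_of_le_one_left hx (by linarith)

end TildeOmega

theorem sq_norm_sub_norm_add_le {E : Type*} [SeminormedAddCommGroup E] (x y : E) :
    (‖x‖ - ‖x + y‖) ^ 2 ≤ ‖y‖ ^ 2 := by
  have h := abs_norm_sub_norm_le x (x + y)
  rw [sub_add_cancel_left, norm_neg] at h
  exact sq_le_sq' (abs_le.mp h).1 (abs_le.mp h).2

theorem tilde_omega_nonneg_general (N : ℕ) (p : ℝ) (hp1 : 1 < p) (hp2 : p < 2)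
    (x y : EuclideanSpace ℝ (Fin N)) :
    let w : EuclideanSpace ℝ (Fin N) :=
      if ‖x‖ < ‖x + y‖ then
        ((‖x + y‖ / ((2 - p) * ‖x + y‖ + (p - 1) * ‖x‖)) ^ ((1 : ℝ) / (p - 2))) • x
      else x
    ‖x‖ ^ (p - 2) * ‖y‖ ^ 2 + (p - 2) * ‖w‖ ^ (p - 2) * (‖x‖ - ‖x + y‖) ^ 2 ≥ 0 := by
  intro w
  have hw : (2 - p) * ‖w‖ ^ (p - 2) ≤ ‖x‖ ^ (p - 2) :=
    two_sub_mul_norm_tildeOmega_rpow_le hp1.le hp2 x (x + y)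
  have hy := mul_le_mul_of_nonneg_left (sq_norm_sub_norm_add_le x y)
    (rpow_nonneg (norm_nonneg x) (p - 2))
  linarith [mul_le_mul_of_nonneg_right hw (sq_nonneg (‖x‖ - ‖x + y‖))]

theorem tilde_omega_nonneg (N : ℕ) (hN : 1 ≤ N) (p : ℝ) (hp1 : 1 < p) (hp2 : p < 2)
    (x y : EuclideanSpace ℝ (Fin N)) (hx : x ≠ 0) :
    let w : EuclideanSpace ℝ (Fin N) :=
      if ‖x‖ < ‖x + y‖ then
        ((‖x + y‖ / ((2 - p) * ‖x + y‖ + (p - 1) * ‖x‖)) ^ ((1 : ℝ) / (p - 2))) • x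
      else x
    ‖x‖ ^ (p - 2) * ‖y‖ ^ 2 + (p - 2) * ‖w‖ ^ (p - 2) * (‖x‖ - ‖x + y‖) ^ 2 ≥ 0 :=
  tilde_omega_nonneg_general N p hp1 hp2 x y
end

section
/- Let $a,b\in\mathbb{R}$ and $r>2$. For any $\kappa>0$ there exists $C=C(r,\kappa)>0$ such that $|a+b|^{r}\le |a|^{r}+r|a|^{r-2}ab+\big(\tfrac{r(r-1)}{2}+\kappa\big)|a|^{r-2}b^2+C|b|^{r}$. -/
open Real Filter Topology

/-!
By homogeneity it suffices to treat `a = 1`, `b = t` (for `a = 0` one only needs `C ≥ 1`).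
The function `g t = 1 + r t + (r(r-1)/2 + κ) t² - (1 + t)^r` satisfies `g 0 = g' 0 = 0` and
`g'' 0 = 2κ > 0`, so by the second-derivative test `g ≥ 0` near `0`. Away from `0`, i.e. for
`|t| ≥ δ`, both `|1 + t|^r` and the linear term `r t` are `O(|t|^r)`, while the quadratic term
is nonnegative.
-/

lemma eventually_one_add_rpow_le (r κ : ℝ) (hκ : 0 < κ) :
    ∀ᶠ t in 𝓝 (0 : ℝ), (1 + t) ^ r ≤ 1 + r * t + (r * (r - 1) / 2 + κ) * t ^ 2 := by
  set K := r * (r - 1) / 2 + κ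
  set g : ℝ → ℝ := fun t ↦ 1 + r * t + K * t ^ 2 - (1 + t) ^ r
  set g' : ℝ → ℝ := fun t ↦ r + 2 * K * t - r * (1 + t) ^ (r - 1)
  have hg : ∀ t, 0 < 1 + t → HasDerivAt g (g' t) t := fun t ht ↦ by
    refine (((((hasDerivAt_id t).const_mul r).const_add 1).add
      ((hasDerivAt_pow 2 t).const_mul K)).sub
      (((hasDerivAt_id t).const_add 1).rpow_const (p := r) (Or.inl ht.ne'))).congr_deriv ?_
    simp only [g', id]
    ring
  have hg' : HasDerivAt g' (2 * κ) 0 := by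
    refine ((((hasDerivAt_id (0 : ℝ)).const_mul (2 * K)).const_add r).sub
      ((((hasDerivAt_id (0 : ℝ)).const_add 1).rpow_const (p := r - 1)
        (Or.inl (by norm_num))).const_mul r)).congr_deriv ?_
    simp only [K, id, add_zero, one_rpow]
    ring
  have hpos : ∀ᶠ t in 𝓝 (0 : ℝ), 0 < 1 + t := by
    filter_upwards [Ioi_mem_nhds (show (-1 : ℝ) < 0 by norm_num)] with t ht
    linarith [Set.mem_Ioi.mp ht]
  have hderiv : deriv g =ᶠ[𝓝 0] g' := hpos.mono fun t ht ↦ (hg t ht).deriv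
  have hmin : IsLocalMin g 0 := by
    refine isLocalMin_of_deriv_deriv_pos ?_ ?_ (hg 0 (by norm_num)).continuousAt
    · rw [hderiv.deriv_eq, hg'.deriv]
      positivity
    · rw [(hg 0 (by norm_num)).deriv]
      simp [g']
  filter_upwards [hmin] with t ht
  simp only [g, mul_zero, add_zero, zero_pow two_ne_zero, one_rpow, sub_self, sub_nonneg] at ht
  linarith

lemma abs_one_add_rpow_add_mul_abs_le {r δ t : ℝ} (hr : 1 ≤ r) (hδ : 0 < δ) (hδ₁ : δ ≤ 1)
    (ht : δ ≤ |t|) : |1 + t| ^ r + r * |t| ≤ (2 ^ r + r) / δ ^ r * |t| ^ r := by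
  set s := |t| / δ
  have hs : 1 ≤ s := (one_le_div hδ).mpr ht
  have hts : |t| ≤ s := le_div_self (abs_nonneg t) hδ hδ₁
  have h₁ : |1 + t| ^ r ≤ 2 ^ r * s ^ r := by
    rw [← mul_rpow zero_le_two (by positivity)]
    gcongr
    calc |1 + t| ≤ 1 + |t| := by simpa using abs_add_le 1 t
      _ ≤ 2 * s := by linarith
  have h₂ : |t| ≤ s ^ r := hts.trans (by simpa using rpow_le_rpow_of_exponent_le hs hr)
  have hsr : s ^ r = |t| ^ r / δ ^ r := div_rpow (abs_nonneg t) hδ.le r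
  calc |1 + t| ^ r + r * |t| ≤ 2 ^ r * s ^ r + r * s ^ r := by gcongr
    _ = (2 ^ r + r) / δ ^ r * |t| ^ r := by rw [hsr]; ring

lemma exists_abs_one_add_rpow_le (r κ : ℝ) (hr : 1 ≤ r) (hκ : 0 < κ) :
    ∃ C, 1 ≤ C ∧ ∀ t : ℝ,
      |1 + t| ^ r ≤ 1 + r * t + (r * (r - 1) / 2 + κ) * t ^ 2 + C * |t| ^ r := by
  obtain ⟨ε, hε, hnear⟩ := Metric.eventually_nhds_iff.mp (eventually_one_add_rpow_le r κ hκ)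
  set δ := min ε 1
  have hδ : 0 < δ := lt_min hε one_pos
  have hδ₁ : δ ≤ 1 := min_le_right ε 1
  have hC : 1 ≤ (2 ^ r + r) / δ ^ r := by
    rw [one_le_div (by positivity)]
    have : δ ^ r ≤ 1 := rpow_le_one hδ.le hδ₁ (by linarith)
    have : 1 ≤ (2 : ℝ) ^ r := one_le_rpow one_le_two (by linarith)
    linarith
  refine ⟨_, hC, fun t ↦ ?_⟩
  have hK : 0 ≤ (r * (r - 1) / 2 + κ) * t ^ 2 := by
    have : 0 ≤ r * (r - 1) := by nlinarith
    positivity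
  rcases lt_or_ge |t| δ with hsmall | hlarge
  · have h1t : |1 + t| = 1 + t := abs_of_pos (by linarith [neg_abs_le t, hδ₁])
    have := hnear (show dist t 0 < ε by simpa using hsmall.trans_le (min_le_left ε 1))
    have : 0 ≤ (2 ^ r + r) / δ ^ r * |t| ^ r := by positivity
    rw [h1t]
    linarith
  · have := abs_one_add_rpow_add_mul_abs_le hr hδ hδ₁ hlarge
    have : -(r * |t|) ≤ r * t := by nlinarith [neg_abs_le t]
    linarith

lemma abs_rpow_eq_abs_rpow_sub_two_mul_sq {a : ℝ} (ha : a ≠ 0) (r : ℝ) :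
    |a| ^ r = |a| ^ (r - 2) * a ^ 2 := by
  rw [← sq_abs a, ← rpow_natCast, ← rpow_add (abs_pos.mpr ha)]
  norm_num

theorem scalar_expansion_r_gt_two (r κ : ℝ) (hr : 2 < r) (hκ : 0 < κ) :
    ∃ C : ℝ, 0 < C ∧ ∀ a b : ℝ,
      |a + b| ^ r ≤ |a| ^ r + r * |a| ^ (r - 2) * a * b
        + (r * (r - 1) / 2 + κ) * |a| ^ (r - 2) * b ^ 2 + C * |b| ^ r := by
  obtain ⟨C, hC, hC_bound⟩ := exists_abs_one_add_rpow_le r κ (by linarith) hκ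
  refine ⟨C, by linarith, fun a b ↦ ?_⟩
  rcases eq_or_ne a 0 with rfl | ha
  · simp only [zero_add, abs_zero, zero_rpow (by linarith : r ≠ 0),
      zero_rpow (by linarith : r - 2 ≠ 0), mul_zero, zero_mul, add_zero]
    exact le_mul_of_one_le_left (by positivity) hC
  calc |a + b| ^ r = |a| ^ r * |1 + b / a| ^ r := by
        rw [← mul_rpow (abs_nonneg a) (abs_nonneg _), ← abs_mul, mul_add, mul_one,
          mul_div_cancel₀ b ha]
    _ ≤ |a| ^ r * (1 + r * (b / a) + (r * (r - 1) / 2 + κ) * (b / a) ^ 2 + C * |b / a| ^ r) :=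
        mul_le_mul_of_nonneg_left (hC_bound _) (by positivity)
    _ = _ := by
        rw [abs_div, div_rpow (abs_nonneg b) (abs_nonneg a),
          abs_rpow_eq_abs_rpow_sub_two_mul_sq ha r]
        field_simp
end

section
/- Let $1<r\le 2$ and $\kappa>0$. There exists $C=C(r,\kappa)>0$ such that for all real $a,b$ with $(a,b)\ne(0,0)$: $|a+b|^{r}\le |a|^{r}+r|a|^{r-2}ab+\big(\tfrac{r(r-1)}{2}+\kappa\big)\frac{(|a|+C|b|)^{r}}{a^2+b^2}b^{2}$. -/
/-!
By the symmetry `(a, b) ↦ (-a, -b)` we may take `a ≥ 0`. Fix a small `δ > 0`.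

If `|b| ≤ δ a`, then `a + b` stays in `[m, ∞)` with `m = (1 - δ) a`, where the second derivative
`r (r - 1) s ^ (r - 2)` of `s ↦ s ^ r` is at most its value at `m` (as `r ≤ 2`). Second-order
Taylor expansion at `a` then bounds the error by
`r (r - 1) / 2 · (1 - δ) ^ (r - 2) · a ^ (r - 2) b²`, and
`a ^ (r - 2) ≤ (1 + δ²) (a + C|b|) ^ r / (a² + b²)`; for small `δ` the factor
`(1 - δ) ^ (r - 2) (1 + δ²)` costs less than the slack `κ`.

If `|b| > δ a`, then `s = a + |b| ≤ L |b|` with `L = 1 + δ⁻¹`: the left side and the linear term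
are both `O(s ^ r)`, while the last term is at least `M (C / L) ^ r / L² · s ^ r` with
`M = r (r - 1) / 2 + κ`, which wins once `C` is large.
-/

open Real Set Filter Topology

theorem rpow_le_second_order_taylor {r m x y : ℝ} (hr1 : 1 ≤ r) (hr2 : r ≤ 2) (hm : 0 < m)
    (hmx : m < x) (hmy : m ≤ y) :
    y ^ r ≤ x ^ r + r * x ^ (r - 1) * (y - x) + r * (r - 1) / 2 * m ^ (r - 2) * (y - x) ^ 2 := by
  set K := r * (r - 1) / 2 * m ^ (r - 2)
  set φ : ℝ → ℝ := fun s ↦ K * (s - x) ^ 2 - s ^ r + r * x ^ (r - 1) * (s - x)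
  set φ' : ℝ → ℝ := fun s ↦ 2 * K * (s - x) - r * s ^ (r - 1) + r * x ^ (r - 1)
  have hφ : ∀ s, 0 < s → HasDerivAt φ (φ' s) s := fun s hs ↦
    (((((hasDerivAt_id s).sub_const x).pow 2).const_mul K).sub
      (hasDerivAt_rpow_const (Or.inl hs.ne'))).add
      (((hasDerivAt_id s).sub_const x).const_mul _) |>.congr_deriv (by simp [φ']; ring)
  have hφ' : ∀ s, 0 < s → HasDerivAt φ' (2 * K - r * ((r - 1) * s ^ (r - 2))) s := fun s hs ↦
    ((((hasDerivAt_id s).sub_const x).const_mul (2 * K)).sub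
      ((hasDerivAt_rpow_const (Or.inl hs.ne')).const_mul r)).add_const _
      |>.congr_deriv (by norm_num [show r - 1 - 1 = r - 2 by ring])
  have hconv : ConvexOn ℝ (Ici m) φ := by
    refine convexOn_of_hasDerivWithinAt2_nonneg (f' := φ')
      (f'' := fun s ↦ 2 * K - r * ((r - 1) * s ^ (r - 2))) (convex_Ici m)
      (fun s hs ↦ (hφ s (hm.trans_le hs)).continuousAt.continuousWithinAt)
      (fun s hs ↦ ?_) (fun s hs ↦ ?_) (fun s hs ↦ ?_) <;> rw [interior_Ici] at hs
    · exact (hφ s (hm.trans hs)).hasDerivWithinAt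
    · exact (hφ' s (hm.trans hs)).hasDerivWithinAt
    · have hsm : s ^ (r - 2) ≤ m ^ (r - 2) := rpow_le_rpow_of_nonpos hm hs.le (by linarith)
      have := mul_le_mul_of_nonneg_left hsm (by nlinarith : 0 ≤ r * (r - 1))
      simp only [K]
      linarith
  have hmin : IsMinOn φ (Ici m) x := by
    refine hconv.isMinOn_of_rightDeriv_eq_zero (by simpa using hmx) ?_
    rw [(hφ x (hm.trans hmx)).hasDerivWithinAt.derivWithin (uniqueDiffWithinAt_Ioi x)]
    ring
  have hxy : φ x ≤ φ y := hmin (mem_Ici.2 hmy)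
  norm_num [φ] at hxy
  linarith

theorem abs_add_rpow_le_of_abs_le_mul {r δ M C a b : ℝ} (hr1 : 1 ≤ r) (hr2 : r ≤ 2)
    (hδ0 : 0 < δ) (hδ1 : δ < 1) (hM : r * (r - 1) / 2 * (1 - δ) ^ (r - 2) * (1 + δ ^ 2) ≤ M)
    (hC : 0 ≤ C) (ha : 0 < a) (hb : |b| ≤ δ * a) :
    |a + b| ^ r ≤ a ^ r + r * a ^ (r - 1) * b
      + M * ((a + C * |b|) ^ r / (a ^ 2 + b ^ 2)) * b ^ 2 := by
  have hm : 0 < (1 - δ) * a := by nlinarith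
  have hb' := abs_le.1 hb
  have htaylor := rpow_le_second_order_taylor (x := a) (y := a + b) hr1 hr2 hm (by nlinarith)
    (by linarith)
  rw [abs_of_pos (by linarith : 0 < a + b)]
  simp only [add_sub_cancel_left] at htaylor
  suffices r * (r - 1) / 2 * ((1 - δ) * a) ^ (r - 2) ≤ M * ((a + C * |b|) ^ r / (a ^ 2 + b ^ 2)) by
    nlinarith [mul_le_mul_of_nonneg_right this (sq_nonneg b)]
  have hsq : a ^ 2 + b ^ 2 ≤ (1 + δ ^ 2) * a ^ 2 := by
    nlinarith [sq_abs b, mul_self_le_mul_self (abs_nonneg b) hb]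
  have hpow : a ^ r ≤ (a + C * |b|) ^ r :=
    rpow_le_rpow ha.le (le_add_of_nonneg_right (by positivity)) (by linarith)
  have hM0 : 0 ≤ M :=
    le_trans (mul_nonneg (mul_nonneg (by nlinarith) (rpow_nonneg (by linarith) _)) (by positivity))
      hM
  calc r * (r - 1) / 2 * ((1 - δ) * a) ^ (r - 2)
      = r * (r - 1) / 2 * (1 - δ) ^ (r - 2) * (1 + δ ^ 2) * (a ^ r / ((1 + δ ^ 2) * a ^ 2)) := by
        rw [mul_rpow (by linarith) ha.le, rpow_sub ha, rpow_two]
        field_simp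
    _ ≤ M * ((a + C * |b|) ^ r / (a ^ 2 + b ^ 2)) := by gcongr

theorem abs_add_rpow_le_of_add_abs_le_mul {r L M C a b : ℝ} (hr : 1 ≤ r) (hL : 0 < L)
    (hM : 1 + r ≤ M * (C / L) ^ r / L ^ 2) (hC : 0 ≤ C) (ha : 0 ≤ a) (hb : b ≠ 0)
    (hab : a + |b| ≤ L * |b|) :
    |a + b| ^ r ≤ a ^ r + r * a ^ (r - 1) * b
      + M * ((a + C * |b|) ^ r / (a ^ 2 + b ^ 2)) * b ^ 2 := by
  set s := a + |b|
  have hb0 : 0 < |b| := abs_pos.2 hb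
  have hs : 0 < s := by positivity
  have hlhs : |a + b| ^ r ≤ s ^ r :=
    rpow_le_rpow (abs_nonneg _) ((abs_add_le a b).trans_eq (by rw [abs_of_nonneg ha])) (by linarith)
  have hlin : -(a ^ (r - 1) * b) ≤ s ^ r := calc
    -(a ^ (r - 1) * b) ≤ a ^ (r - 1) * |b| := by
      rw [← mul_neg]; exact mul_le_mul_of_nonneg_left (neg_le_abs b) (by positivity)
    _ ≤ s ^ (r - 1) * s := by
      gcongr
      · linarith
      · simp [s, ha]
    _ = s ^ r := by rw [← rpow_add_one hs.ne', sub_add_cancel]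
  have hpow : (C / L) ^ r * s ^ r ≤ (a + C * |b|) ^ r := by
    rw [← mul_rpow (by positivity) hs.le]
    refine rpow_le_rpow (by positivity) ?_ (by linarith)
    calc C / L * s ≤ C / L * (L * |b|) := by gcongr
      _ = C * |b| := by field_simp
      _ ≤ a + C * |b| := by linarith
  have hfrac : 1 / L ^ 2 ≤ b ^ 2 / (a ^ 2 + b ^ 2) := by
    rw [div_le_div_iff₀ (by positivity) (by positivity), one_mul, ← sq_abs b]
    nlinarith [mul_self_le_mul_self hs.le hab]
  have hM0 : 0 ≤ M := by
    have : 0 < M * ((C / L) ^ r / L ^ 2) := by rw [← mul_div_assoc]; linarith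
    exact (pos_of_mul_pos_left this (by positivity)).le
  have hlast : (1 + r) * s ^ r ≤ M * ((a + C * |b|) ^ r / (a ^ 2 + b ^ 2)) * b ^ 2 := calc
    (1 + r) * s ^ r ≤ M * (C / L) ^ r / L ^ 2 * s ^ r := by gcongr
    _ = M * ((C / L) ^ r * s ^ r) * (1 / L ^ 2) := by ring
    _ ≤ M * (a + C * |b|) ^ r * (b ^ 2 / (a ^ 2 + b ^ 2)) := by gcongr
    _ = M * ((a + C * |b|) ^ r / (a ^ 2 + b ^ 2)) * b ^ 2 := by ring
  have : 0 ≤ a ^ r := by positivity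
  nlinarith

theorem exists_mul_one_sub_rpow_mul_one_add_sq_le {P q M : ℝ} (h : P < M) :
    ∃ δ, 0 < δ ∧ δ < 1 ∧ P * (1 - δ) ^ q * (1 + δ ^ 2) ≤ M := by
  have hlim : Tendsto (fun δ : ℝ ↦ P * (1 - δ) ^ q * (1 + δ ^ 2)) (𝓝[>] 0) (𝓝 P) := by
    have : ContinuousAt (fun δ : ℝ ↦ P * (1 - δ) ^ q * (1 + δ ^ 2)) 0 := by
      fun_prop (disch := norm_num)
    simpa using this.tendsto.mono_left nhdsWithin_le_nhds
  obtain ⟨δ, hδM, hδ⟩ :=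
    ((hlim.eventually (eventually_le_nhds h)).and (Ioo_mem_nhdsGT one_pos)).exists
  exact ⟨δ, hδ.1, hδ.2, hδM⟩

theorem exists_pos_le_mul_div_rpow_div_sq {r L M : ℝ} (K : ℝ) (hr : 0 < r) (hL : 0 < L)
    (hM : 0 < M) : ∃ C, 0 < C ∧ K ≤ M * (C / L) ^ r / L ^ 2 := by
  have hlim : Tendsto (fun C ↦ M * (C / L) ^ r / L ^ 2) atTop atTop :=
    (((tendsto_rpow_atTop hr).comp (tendsto_id.atTop_div_const hL)).const_mul_atTop hM
      ).atTop_div_const (by positivity)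
  obtain ⟨C, hCK, hC⟩ := ((hlim.eventually_ge_atTop K).and (eventually_gt_atTop 0)).exists
  exact ⟨C, hC, hCK⟩

theorem rpow_sub_two_mul_self {x r : ℝ} (hx : 0 ≤ x) (hr : r ≠ 1) :
    x ^ (r - 2) * x = x ^ (r - 1) := by
  rw [← rpow_add_one' hx (by contrapose! hr; linarith)]
  ring_nf

theorem scalar_expansion_r_le_two (r κ : ℝ) (hr1 : 1 < r) (hr2 : r ≤ 2) (hκ : 0 < κ) :
    ∃ C : ℝ, 0 < C ∧ ∀ a b : ℝ, (a ≠ 0 ∨ b ≠ 0) →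
      |a + b| ^ r ≤ |a| ^ r + r * |a| ^ (r - 2) * a * b
        + (r * (r - 1) / 2 + κ) * ((|a| + C * |b|) ^ r / (a ^ 2 + b ^ 2)) * b ^ 2 := by
  obtain ⟨δ, hδ0, hδ1, hδM⟩ := exists_mul_one_sub_rpow_mul_one_add_sq_le (q := r - 2)
    (P := r * (r - 1) / 2) (lt_add_of_pos_right _ hκ)
  obtain ⟨C, hC, hCM⟩ := exists_pos_le_mul_div_rpow_div_sq (r := r) (1 + r) (by linarith)
    (by positivity : 0 < 1 + δ⁻¹) (by nlinarith : 0 < r * (r - 1) / 2 + κ)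
  have of_nonneg : ∀ a b : ℝ, 0 ≤ a → (a ≠ 0 ∨ b ≠ 0) →
      |a + b| ^ r ≤ |a| ^ r + r * |a| ^ (r - 2) * a * b
        + (r * (r - 1) / 2 + κ) * ((|a| + C * |b|) ^ r / (a ^ 2 + b ^ 2)) * b ^ 2 := by
    intro a b ha hab
    rw [abs_of_nonneg ha, mul_assoc r, rpow_sub_two_mul_self ha hr1.ne']
    rcases le_or_gt |b| (δ * a) with hb | hb
    · have ha0 : 0 < a := ha.lt_of_ne' fun h ↦ by simp_all
      exact abs_add_rpow_le_of_abs_le_mul hr1.le hr2 hδ0 hδ1 hδM hC.le ha0 hb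
    · refine abs_add_rpow_le_of_add_abs_le_mul hr1.le (by positivity) hCM hC.le ha
        (abs_pos.1 ((mul_nonneg hδ0.le ha).trans_lt hb)) ?_
      have := (le_inv_mul_iff₀ hδ0).2 hb.le
      linarith [show (1 + δ⁻¹) * |b| = |b| + δ⁻¹ * |b| by ring]
  refine ⟨C, hC, fun a b hab ↦ ?_⟩
  rcases le_total 0 a with ha | ha
  · exact of_nonneg a b ha hab
  · have hneg := of_nonneg (-a) (-b) (neg_nonneg.2 ha) (by simpa using hab)
    rw [← neg_add, abs_neg] at hneg
    simpa using hneg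
end

section
/- Let $p\ge 2$ and $\kappa\in(0,1)$. There exists $C_1=C_1(p,\kappa)>0$ such that for all $x,y\in\mathbb{R}^N$ with $x\ne0$: $|x+y|^p\ge |x|^p+p|x|^{p-2}x\cdot y+\tfrac{1-\kappa}{2}\big(p|x|^{p-2}|y|^2+p(p-2)|\bar\omega|^{p-2}(|x|-|x+y|)^2\big)+C_1|y|^p$, where $\bar\omega=\bar\omega(x,x+y)$ equals $x$ if $|x|<|x+y|$ and $(|x+y|/|x|)^{1/(p-2)}(x+y)$ if $|x+y|\le|x|$. -/
open Real
open scoped RealInnerProductSpace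

/-!
Write `a = ‖x‖`, `b = ‖x + y‖`, `s = ‖y‖`, so that `2⟪x, y⟫ = b² - a² - s²` and everything
becomes scalar. The key quantity is the gap `G = b^p - a^p - (p/2) a^(p-2) (b² - a²)` of the
convex function `u ↦ u^(p/2)` above its tangent at `u = a²`. A monotonicity argument (in `b`
when `a ≤ b`, in `a` when `b ≤ a`) shows that `G` dominates `(p/2)(p-2) |ω̄|^(p-2) (a - b)²`.
The difference of the two sides of the inequality is then at least
`κ (G + (p/2) a^(p-2) s² - c s^p)`, and `G + (p/2) a^(p-2) s² ≥ c s^p`: for `s ≤ (2p+1) a` the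
quadratic term alone suffices, while for larger `s` one has `b ≥ s/2` and `a ≤ b/(2p)`, so that
`G + (p/2) a^(p-2) (b - a)² ≥ b^p / 2`.
-/

lemma rpow_sub_two_mul_sq {x p : ℝ} (hx : 0 ≤ x) (hp : p ≠ 0) :
    x ^ (p - 2) * x ^ 2 = x ^ p := by
  rw [← rpow_add_natCast' hx (by simpa using hp)]
  norm_num

lemma rpow_tangent_le {q a t : ℝ} (hq : 1 ≤ q) (ha : 0 < a) (ht : 0 ≤ t) :
    a ^ q + q * a ^ (q - 1) * (t - a) ≤ t ^ q := by
  have h := one_add_mul_self_le_rpow_one_add (s := t / a - 1)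
    (by linarith [div_nonneg ht ha.le]) hq
  rw [add_sub_cancel, div_rpow ht ha.le, le_div_iff₀ (rpow_pos_of_pos ha q)] at h
  have ha' : a ^ q = a ^ (q - 1) * a := by rw [rpow_sub_one ha.ne', div_mul_cancel₀ _ ha.ne']
  calc a ^ q + q * a ^ (q - 1) * (t - a) = (1 + q * (t / a - 1)) * a ^ q := by
        rw [ha']; field_simp
    _ ≤ t ^ q := h

lemma le_of_hasDerivAt_nonneg {f f' : ℝ → ℝ} {a b : ℝ} (hab : a ≤ b)
    (hf : ∀ t ∈ Set.Icc a b, HasDerivAt f (f' t) t) (hf' : ∀ t ∈ Set.Ioo a b, 0 ≤ f' t) :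
    f a ≤ f b := by
  refine monotoneOn_of_hasDerivWithinAt_nonneg (f' := f') (convex_Icc a b)
    (fun t ht => (hf t ht).continuousAt.continuousWithinAt) (fun t ht => ?_) ?_
    (Set.left_mem_Icc.2 hab) (Set.right_mem_Icc.2 hab) hab
  · rw [interior_Icc] at ht ⊢
    exact (hf t (Set.Ioo_subset_Icc_self ht)).hasDerivWithinAt
  · rwa [interior_Icc]

noncomputable def tangentGap (p a b : ℝ) : ℝ :=
  b ^ p - a ^ p - p / 2 * a ^ (p - 2) * (b ^ 2 - a ^ 2)

lemma tangentGap_nonneg {p a b : ℝ} (hp : 2 ≤ p) (ha : 0 < a) (hb : 0 ≤ b) :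
    0 ≤ tangentGap p a b := by
  have h := rpow_tangent_le (q := p / 2) (by linarith) (pow_pos ha 2) (sq_nonneg b)
  have hsq {x : ℝ} (hx : 0 ≤ x) (r : ℝ) : (x ^ 2) ^ (r / 2) = x ^ r := by
    rw [← rpow_natCast_mul hx, Nat.cast_ofNat, mul_div_cancel₀ _ two_ne_zero]
  rw [hsq ha.le, hsq hb, show p / 2 - 1 = (p - 2) / 2 by ring, hsq ha.le] at h
  unfold tangentGap
  linarith

lemma tangentGap_ge_of_le {p a b : ℝ} (hp : 2 ≤ p) (ha : 0 < a) (hab : a ≤ b) :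
    p / 2 * (p - 2) * a ^ (p - 2) * (a - b) ^ 2 ≤ tangentGap p a b := by
  set A := a ^ (p - 2)
  let f : ℝ → ℝ := fun t => t ^ p - p / 2 * A * t ^ 2 - p / 2 * (p - 2) * A * (t - a) ^ 2
  have hf : ∀ t ∈ Set.Icc a b,
      HasDerivAt f (p * (t ^ (p - 1) - A * t - (p - 2) * A * (t - a))) t := by
    intro t ht
    have := ((hasDerivAt_rpow_const (p := p) (Or.inl (ha.trans_le ht.1).ne')).sub
      (((hasDerivAt_id t).pow 2).const_mul (p / 2 * A))).sub
      ((((hasDerivAt_id t).sub_const a).pow 2).const_mul (p / 2 * (p - 2) * A))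
    exact this.congr_deriv (by simp; ring)
  have hf' : ∀ t ∈ Set.Ioo a b, 0 ≤ p * (t ^ (p - 1) - A * t - (p - 2) * A * (t - a)) := by
    intro t ht
    have h := rpow_tangent_le (q := p - 1) (by linarith) ha (ha.trans ht.1).le
    rw [show p - 1 - 1 = p - 2 by ring,
      show a ^ (p - 1) = A * a by rw [← rpow_add_one ha.ne']; ring_nf] at h
    nlinarith
  have := le_of_hasDerivAt_nonneg hab hf hf'
  simp only [f] at this
  unfold tangentGap
  linear_combination this

lemma tangentGap_ge_of_ge {p a b : ℝ} (hp : 2 ≤ p) (hb : 0 < b) (hba : b ≤ a) :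
    p / 2 * (p - 2) * (b ^ (p - 1) / a) * (a - b) ^ 2 ≤ tangentGap p a b := by
  set B := b ^ (p - 1)
  let g : ℝ → ℝ := fun t =>
    b ^ p - t ^ p - p / 2 * t ^ (p - 2) * (b ^ 2 - t ^ 2) - p / 2 * (p - 2) * B * ((t - b) ^ 2 / t)
  have hg : ∀ t ∈ Set.Icc b a,
      HasDerivAt g (p / 2 * (p - 2) * ((t ^ 2 - b ^ 2) * (t ^ (p - 1) - B)) / t ^ 2) t := by
    intro t ht
    have ht0 : 0 < t := hb.trans_le ht.1
    have := (((hasDerivAt_rpow_const (p := p) (Or.inl ht0.ne')).const_sub (b ^ p)).sub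
      (((hasDerivAt_rpow_const (p := p - 2) (Or.inl ht0.ne')).const_mul (p / 2)).mul
        ((hasDerivAt_pow 2 t).const_sub (b ^ 2)))).sub
      (((((hasDerivAt_id t).sub_const b).pow 2).div (hasDerivAt_id t) ht0.ne').const_mul
        (p / 2 * (p - 2) * B))
    refine this.congr_deriv ?_
    have e1 : t ^ (p - 2 - 1) = t ^ (p - 1) / t ^ 2 := by
      rw [show p - 2 - 1 = p - 1 - 2 by ring, rpow_sub ht0, rpow_two]
    have e2 : t ^ (p - 2) = t ^ (p - 1) / t := by
      rw [show p - 2 = p - 1 - 1 by ring, rpow_sub_one ht0.ne']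
    simp only [e1, e2, id, Pi.pow_apply]
    field_simp
    ring
  have hg' : ∀ t ∈ Set.Ioo b a,
      0 ≤ p / 2 * (p - 2) * ((t ^ 2 - b ^ 2) * (t ^ (p - 1) - B)) / t ^ 2 := by
    intro t ht
    have hsq : 0 ≤ t ^ 2 - b ^ 2 := by nlinarith [ht.1]
    have hpow : B ≤ t ^ (p - 1) := rpow_le_rpow hb.le ht.1.le (by linarith)
    have hp' : 0 ≤ p / 2 * (p - 2) := by nlinarith
    exact div_nonneg (mul_nonneg hp' (mul_nonneg hsq (sub_nonneg.2 hpow))) (sq_nonneg t)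
  have hgb : g b = 0 := by simp [g]
  have := le_of_hasDerivAt_nonneg hba hg hg'
  simp only [hgb, g] at this
  unfold tangentGap
  linear_combination this

noncomputable def omegaBarWeight (p a b : ℝ) : ℝ :=
  if a < b then a ^ (p - 2) else b ^ (p - 1) / a

lemma omegaBarWeight_mul_sq_le_tangentGap {p a b : ℝ} (hp : 2 ≤ p) (ha : 0 < a) (hb : 0 ≤ b) :
    p / 2 * (p - 2) * omegaBarWeight p a b * (a - b) ^ 2 ≤ tangentGap p a b := by
  unfold omegaBarWeight
  split_ifs with hab
  · exact tangentGap_ge_of_le hp ha hab.le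
  · rcases hb.eq_or_lt with rfl | hb
    · simpa [zero_rpow (by linarith : p - 1 ≠ 0)] using tangentGap_nonneg hp ha le_rfl
    · exact tangentGap_ge_of_ge hp hb (not_lt.1 hab)

lemma exists_pos_mul_rpow_le_tangentGap_add {p : ℝ} (hp : 2 ≤ p) :
    ∃ c > 0, ∀ a b s : ℝ, 0 < a → |a - b| ≤ s → s ≤ a + b →
      c * s ^ p ≤ tangentGap p a b + p / 2 * a ^ (p - 2) * s ^ 2 := by
  set K := 2 * p + 1
  have hK : 0 < K := by positivity
  have hp0 : p ≠ 0 := (zero_lt_two.trans_le hp).ne'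
  refine ⟨min (p / 2 / K ^ (p - 2)) (1 / (2 * 2 ^ p)), by positivity, fun a b s ha hs hs' => ?_⟩
  have hb : 0 ≤ b := by linarith [le_abs_self (a - b)]
  have hs0 : 0 ≤ s := (abs_nonneg _).trans hs
  rcases le_or_gt s (K * a) with hsa | hsa
  · calc min (p / 2 / K ^ (p - 2)) (1 / (2 * 2 ^ p)) * s ^ p ≤ p / 2 / K ^ (p - 2) * s ^ p := by
          gcongr; exact min_le_left _ _
      _ = p / 2 * (s / K) ^ (p - 2) * s ^ 2 := by
          rw [div_rpow hs0 hK.le, ← rpow_sub_two_mul_sq hs0 hp0]; ring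
      _ ≤ p / 2 * a ^ (p - 2) * s ^ 2 := by
          gcongr
          rw [div_le_iff₀ hK]
          linarith
      _ ≤ _ := by linarith [tangentGap_nonneg hp ha hb]
  · have hab : 2 * p * a ≤ b := by linarith
    have hbs : s / 2 ≤ b := by nlinarith
    have hA : a ^ (p - 2) ≤ b ^ (p - 2) := rpow_le_rpow ha.le (by nlinarith) (by linarith)
    have hsq : (b - a) ^ 2 ≤ s ^ 2 := by
      rw [← sq_abs, abs_sub_comm]; exact pow_le_pow_left₀ (abs_nonneg _) hs 2
    have hcross : p * a ^ (p - 2) * a * b ≤ b ^ p / 2 := by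
      calc p * a ^ (p - 2) * a * b = a ^ (p - 2) * (p * a) * b := by ring
        _ ≤ b ^ (p - 2) * (b / 2) * b := by gcongr; linarith
        _ = b ^ (p - 2) * b ^ 2 / 2 := by ring
        _ = b ^ p / 2 := by rw [rpow_sub_two_mul_sq hb hp0]
    have hsq' := mul_le_mul_of_nonneg_left hsq (by positivity : 0 ≤ p / 2 * a ^ (p - 2))
    have hap : a ^ (p - 2) * a ^ 2 = a ^ p := rpow_sub_two_mul_sq ha.le hp0
    have hap0 : 0 ≤ (p - 1) * a ^ p := mul_nonneg (by linarith) (by positivity)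
    calc min (p / 2 / K ^ (p - 2)) (1 / (2 * 2 ^ p)) * s ^ p ≤ 1 / (2 * 2 ^ p) * s ^ p := by
          gcongr; exact min_le_right _ _
      _ = (s / 2) ^ p / 2 := by rw [div_rpow hs0 zero_le_two]; ring
      _ ≤ b ^ p / 2 := by gcongr
      _ ≤ tangentGap p a b + p / 2 * a ^ (p - 2) * s ^ 2 := by
          unfold tangentGap
          linear_combination hsq' + hcross + hap0 - p * hap

section omegaBar

variable {E : Type*} [NormedAddCommGroup E] [NormedSpace ℝ E]

noncomputable def omegaBar (p : ℝ) (x z : E) : E :=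
  if ‖x‖ < ‖z‖ then x else (‖z‖ / ‖x‖) ^ ((1 : ℝ) / (p - 2)) • z

lemma norm_omegaBar_rpow {p : ℝ} (hp : 2 < p) (x z : E) :
    ‖omegaBar p x z‖ ^ (p - 2) = omegaBarWeight p ‖x‖ ‖z‖ := by
  unfold omegaBar omegaBarWeight
  split_ifs
  · rfl
  · have hc : 0 ≤ ‖z‖ / ‖x‖ := by positivity
    rw [norm_smul, norm_of_nonneg (rpow_nonneg hc _), mul_rpow (rpow_nonneg hc _) (norm_nonneg _),
      ← rpow_mul hc, one_div_mul_cancel (by linarith), rpow_one, div_mul_eq_mul_div,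
      ← rpow_one_add' (norm_nonneg _) (by linarith)]
    ring_nf

end omegaBar

theorem vector_expansion_p_ge_two_general (N : ℕ) (p κ : ℝ)
    (hp : 2 ≤ p) (hκ0 : 0 < κ) (hκ1 : κ < 1) :
    ∃ C₁ : ℝ, 0 < C₁ ∧ ∀ x y : EuclideanSpace ℝ (Fin N), x ≠ 0 →
      let w : EuclideanSpace ℝ (Fin N) :=
        if ‖x‖ < ‖x + y‖ then x
        else ((‖x + y‖ / ‖x‖) ^ ((1 : ℝ) / (p - 2))) • (x + y)
      ‖x + y‖ ^ p ≥ ‖x‖ ^ p + p * ‖x‖ ^ (p - 2) * ⟪x, y⟫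
        + (1 - κ) / 2 * (p * ‖x‖ ^ (p - 2) * ‖y‖ ^ 2
            + p * (p - 2) * ‖w‖ ^ (p - 2) * (‖x‖ - ‖x + y‖) ^ 2)
        + C₁ * ‖y‖ ^ p := by
  obtain ⟨c, hc, hgap⟩ := exists_pos_mul_rpow_le_tangentGap_add hp
  refine ⟨κ * c, mul_pos hκ0 hc, fun x y hx => ?_⟩
  intro w
  have hw : (p - 2) * ‖w‖ ^ (p - 2) = (p - 2) * omegaBarWeight p ‖x‖ ‖x + y‖ := by
    rcases hp.eq_or_lt with rfl | hp
    · simp -- at `p = 2` the junk exponent `1 / 0 = 0` is harmless: the factor `p - 2` vanishes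
    · rw [← norm_omegaBar_rpow hp]; rfl
  have ha : 0 < ‖x‖ := norm_pos_iff.2 hx
  have hT := mul_le_mul_of_nonneg_left
    (omegaBarWeight_mul_sq_le_tangentGap hp ha (norm_nonneg (x + y))) (sub_nonneg.2 hκ1.le)
  have hS := mul_le_mul_of_nonneg_left (hgap ‖x‖ ‖x + y‖ ‖y‖ ha
    (by simpa using abs_norm_sub_norm_le x (x + y))
    (by simpa [add_comm] using norm_sub_le (x + y) x)) hκ0.le
  unfold tangentGap at hT hS
  linear_combination hT + hS - p * ‖x‖ ^ (p - 2) / 2 * norm_add_sq_real x y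
    + (1 - κ) / 2 * p * (‖x‖ - ‖x + y‖) ^ 2 * hw

theorem vector_expansion_p_ge_two (N : ℕ) (hN : 1 ≤ N) (p κ : ℝ)
    (hp : 2 ≤ p) (hκ0 : 0 < κ) (hκ1 : κ < 1) :
    ∃ C₁ : ℝ, 0 < C₁ ∧ ∀ x y : EuclideanSpace ℝ (Fin N), x ≠ 0 →
      let w : EuclideanSpace ℝ (Fin N) :=
        if ‖x‖ < ‖x + y‖ then x
        else ((‖x + y‖ / ‖x‖) ^ ((1 : ℝ) / (p - 2))) • (x + y)
      ‖x + y‖ ^ p ≥ ‖x‖ ^ p + p * ‖x‖ ^ (p - 2) * ⟪x, y⟫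
        + (1 - κ) / 2 * (p * ‖x‖ ^ (p - 2) * ‖y‖ ^ 2
            + p * (p - 2) * ‖w‖ ^ (p - 2) * (‖x‖ - ‖x + y‖) ^ 2)
        + C₁ * ‖y‖ ^ p :=
  vector_expansion_p_ge_two_general N p κ hp hκ0 hκ1
end

section
/- Let $K>p>1$. The function $\eta_0(\tau)=\frac{(p-1)-\tau^{p/(p-1)}}{(1+\tau^{p/(p-1)})^{K/p}}$ satisfies, for all $\tau>0$, the ODE $\eta_0''+\Big(\frac{K-1}{p-1}+\frac{(p-2)K}{(p-1)(1+\tau^{p/(p-1)})}\Big)\frac{\eta_0'}{\tau}+\frac{K(Kp-K+p)}{(p-1)^2}\frac{\tau^{p/(p-1)-2}}{(1+\tau^{p/(p-1)})^2}\eta_0=0$. -/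
/-!
Write `u = τ ^ A` with `A = p / (p - 1)`, so that `η₀ = (c - u) / (1 + u) ^ b` with `c = p - 1`,
`b = K / p`. Both derivatives follow from the chain rule for `τ ↦ τ ^ A` in closed form, for
arbitrary `A`, `b`, `c`. Since `τ ^ (A - 1) = u / τ` and `τ ^ (A - 2) = u / τ ^ 2`, the ODE then
becomes a rational identity in `τ`, `u` and `(1 + u) ^ b`.
-/

open Real Filter Topology

lemma rpow_sub_two_eq_div {t : ℝ} (ht : 0 < t) (a : ℝ) : t ^ (a - 2) = t ^ a / t ^ 2 := by
  simpa using rpow_sub_natCast ht.ne' a 2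

noncomputable section

namespace RadialProfile

variable (A b c : ℝ)

def profile (t : ℝ) : ℝ := (c - t ^ A) / (1 + t ^ A) ^ b

def profileDeriv (t : ℝ) : ℝ :=
  -A * t ^ (A - 1) * ((1 + t ^ A) + b * (c - t ^ A)) / (1 + t ^ A) ^ (b + 1)

def profileDeriv2 (t : ℝ) : ℝ :=
  -A * t ^ (A - 2) * ((A - 1) * ((1 + t ^ A) + b * (c - t ^ A))
    + A * t ^ A * ((1 - b) - (b + 1) * ((1 + t ^ A) + b * (c - t ^ A)) / (1 + t ^ A)))
    / (1 + t ^ A) ^ (b + 1)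

variable {A b c} {t : ℝ}

lemma hasDerivAt_one_add_rpow (ht : 0 < t) :
    HasDerivAt (fun s : ℝ => 1 + s ^ A) (A * t ^ (A - 1)) t :=
  (hasDerivAt_rpow_const (Or.inl ht.ne')).const_add 1

lemma hasDerivAt_one_add_rpow_rpow (ht : 0 < t) (e : ℝ) :
    HasDerivAt (fun s : ℝ => (1 + s ^ A) ^ e)
      (e * (1 + t ^ A) ^ (e - 1) * (A * t ^ (A - 1))) t := by
  have hw : 0 < 1 + t ^ A := by positivity
  exact (hasDerivAt_rpow_const (Or.inl hw.ne')).comp t (hasDerivAt_one_add_rpow ht)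

lemma hasDerivAt_profile (ht : 0 < t) :
    HasDerivAt (profile A b c) (profileDeriv A b c t) t := by
  have hw : 0 < 1 + t ^ A := by positivity
  have hnum : HasDerivAt (fun s : ℝ => c - s ^ A) (-(A * t ^ (A - 1))) t :=
    (hasDerivAt_rpow_const (Or.inl ht.ne')).const_sub c
  refine (hnum.div (hasDerivAt_one_add_rpow_rpow ht b) (by positivity)).congr_deriv ?_
  rw [profileDeriv, rpow_sub_one hw.ne', rpow_add_one hw.ne']
  field_simp
  ring

lemma deriv_profile_eventuallyEq (ht : 0 < t) :
    deriv (profile A b c) =ᶠ[𝓝 t] profileDeriv A b c := by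
  filter_upwards [Ioi_mem_nhds ht] with s hs
  exact (hasDerivAt_profile hs).deriv

lemma hasDerivAt_profileDeriv (ht : 0 < t) :
    HasDerivAt (profileDeriv A b c) (profileDeriv2 A b c t) t := by
  have hw : 0 < 1 + t ^ A := by positivity
  have hpow : HasDerivAt (fun s : ℝ => -A * s ^ (A - 1)) (-A * ((A - 1) * t ^ (A - 1 - 1))) t :=
    (hasDerivAt_rpow_const (Or.inl ht.ne')).const_mul (-A)
  have hlin : HasDerivAt (fun s : ℝ => (1 + s ^ A) + b * (c - s ^ A))
      (A * t ^ (A - 1) + b * -(A * t ^ (A - 1))) t :=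
    (hasDerivAt_one_add_rpow ht).add
      (((hasDerivAt_rpow_const (Or.inl ht.ne')).const_sub c).const_mul b)
  have hnum : HasDerivAt (fun s : ℝ => -A * s ^ (A - 1) * ((1 + s ^ A) + b * (c - s ^ A)))
      (-A * ((A - 1) * t ^ (A - 1 - 1)) * ((1 + t ^ A) + b * (c - t ^ A))
        + -A * t ^ (A - 1) * (A * t ^ (A - 1) + b * -(A * t ^ (A - 1)))) t :=
    hpow.mul hlin
  refine (hnum.div (hasDerivAt_one_add_rpow_rpow ht (b + 1)) (by positivity)).congr_deriv ?_
  rw [profileDeriv2, show b + 1 - 1 = b by ring, rpow_add_one hw.ne', show A - 1 - 1 = A - 2 by ring,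
    rpow_sub_two_eq_div ht, rpow_sub_one ht.ne']
  field_simp
  ring

lemma deriv_deriv_profile (ht : 0 < t) :
    deriv (deriv (profile A b c)) t = profileDeriv2 A b c t := by
  rw [(deriv_profile_eventuallyEq ht).deriv_eq, (hasDerivAt_profileDeriv ht).deriv]

end RadialProfile

end

open RadialProfile in
theorem eta0_solves_ode_general (p K : ℝ) (hp : 1 < p) :
    ∀ τ : ℝ, 0 < τ →
      let η₀ : ℝ → ℝ := fun t => ((p - 1) - t ^ (p / (p - 1))) /
        ((1 + t ^ (p / (p - 1))) ^ (K / p))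
      deriv (deriv η₀) τ
        + ((K - 1) / (p - 1) + (p - 2) * K / ((p - 1) * (1 + τ ^ (p / (p - 1)))))
          * (deriv η₀ τ / τ)
        + K * (K * p - K + p) / (p - 1) ^ 2
          * (τ ^ (p / (p - 1) - 2) / (1 + τ ^ (p / (p - 1))) ^ 2) * η₀ τ = 0 := by
  intro τ hτ η₀
  have hη₀ : η₀ = profile (p / (p - 1)) (K / p) (p - 1) := rfl
  have hw : 0 < 1 + τ ^ (p / (p - 1)) := by positivity
  have hp1 : p - 1 ≠ 0 := by linarith
  rw [hη₀, deriv_deriv_profile hτ, (hasDerivAt_profile hτ).deriv, profile, profileDeriv,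
    profileDeriv2, rpow_add_one hw.ne', rpow_sub_two_eq_div hτ, rpow_sub_one hτ.ne']
  field_simp
  ring

theorem eta0_solves_ode (p K : ℝ) (hp : 1 < p) (hK : p < K) :
    ∀ τ : ℝ, 0 < τ →
      let η₀ : ℝ → ℝ := fun t => ((p - 1) - t ^ (p / (p - 1))) /
        ((1 + t ^ (p / (p - 1))) ^ (K / p))
      deriv (deriv η₀) τ
        + ((K - 1) / (p - 1) + (p - 2) * K / ((p - 1) * (1 + τ ^ (p / (p - 1)))))
          * (deriv η₀ τ / τ)
        + K * (K * p - K + p) / (p - 1) ^ 2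
          * (τ ^ (p / (p - 1) - 2) / (1 + τ ^ (p / (p - 1))) ^ 2) * η₀ τ = 0 :=
  eta0_solves_ode_general p K hp
end

section
/- Let $N\ge 2$, $1<p<p+\mu<N$, $p-s+\mu>0$, $r=\frac{p(N-s)}{N-p-\mu}$, and $U(x)=C_{N,p,\mu,s}(1+|x|^{\frac{p-s+\mu}{p-1}})^{-\frac{N-p-\mu}{p-s+\mu}}$ with $C_{N,p,\mu,s}=\big[(N-s)\big(\frac{N-p-\mu}{p-1}\big)^{p-1}\big]^{\frac{N-p-\mu}{p(p-s+\mu)}}$. Then $U$ is a classical positive solution on $\mathbb{R}^N\setminus\{0\}$ of the weighted $p$-Laplace equation $-\mathrm{div}(|x|^{-\mu}|\nabla U|^{p-2}\nabla U)=|x|^{-s}U^{r-1}$. -/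
/-!
Writing `U x = u ‖x‖` with `u t = C (1 + t ^ a) ^ (-b)`, `a = (p - s + μ) / (p - 1)`,
`b = (N - p - μ) / (p - s + μ)`, the gradient of `U` is `u' ‖x‖ / ‖x‖ • x` with `u' < 0`, and the
choice of `a` makes the weighted flux radial of the form `-K ‖x‖ ^ (-s) (1 + ‖x‖ ^ a) ^ e • x`,
`K = (C a b) ^ (p - 1)`, `e = -(b + 1) (p - 1)`. The divergence of `g ‖x‖ • x` is
`N g + t g'`, and since `e a = s - N` the two terms combine into
`-K (N - s) ‖x‖ ^ (-s) (1 + ‖x‖ ^ a) ^ (e - 1)`. Finally `-b (r - 1) = e - 1`, and `C` is chosen so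
that `C ^ (r - p) = (N - s) (a b) ^ (p - 1)`, i.e. `C ^ (r - 1) = K (N - s)`.
-/

open Real Filter Topology

section Radial

variable {E : Type*} [NormedAddCommGroup E] [InnerProductSpace ℝ E] {x : E}

theorem hasFDerivAt_norm_of_ne_zero (hx : x ≠ 0) :
    HasFDerivAt (‖·‖) (‖x‖⁻¹ • innerSL ℝ x) x := by
  have h := (Real.hasDerivAt_sqrt (pow_pos (norm_pos_iff.2 hx) 2).ne').comp_hasFDerivAt x
    (hasStrictFDerivAt_norm_sq x).hasFDerivAt
  rw [Real.sqrt_sq (norm_nonneg x)] at h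
  refine (h.congr_fderiv ?_).congr_of_eventuallyEq
    (Eventually.of_forall fun y ↦ (Real.sqrt_sq (norm_nonneg y)).symm)
  ext v
  simp only [one_div, mul_inv_rev, smul_apply, coe_innerSL_apply,
    nsmul_eq_mul, Nat.cast_ofNat, smul_eq_mul]
  field_simp

theorem HasDerivAt.hasFDerivAt_comp_norm {f : ℝ → ℝ} {f' : ℝ} (hf : HasDerivAt f f' ‖x‖)
    (hx : x ≠ 0) : HasFDerivAt (fun y ↦ f ‖y‖) ((f' / ‖x‖) • innerSL ℝ x) x := by
  have h := hf.comp_hasFDerivAt x (hasFDerivAt_norm_of_ne_zero hx)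
  rwa [smul_smul, ← div_eq_mul_inv] at h

theorem HasDerivAt.hasGradientAt_comp_norm [CompleteSpace E] {f : ℝ → ℝ} {f' : ℝ}
    (hf : HasDerivAt f f' ‖x‖) (hx : x ≠ 0) :
    HasGradientAt (fun y ↦ f ‖y‖) ((f' / ‖x‖) • x) x := by
  rw [hasGradientAt_iff_hasFDerivAt, map_smul]
  exact hf.hasFDerivAt_comp_norm hx

theorem HasDerivAt.hasFDerivAt_smul_comp_norm {g : ℝ → ℝ} {g' : ℝ} (hg : HasDerivAt g g' ‖x‖)
    (hx : x ≠ 0) :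
    HasFDerivAt (fun y ↦ g ‖y‖ • y)
      (g ‖x‖ • ContinuousLinearMap.id ℝ E + ((g' / ‖x‖) • innerSL ℝ x).smulRight x) x :=
  (hg.hasFDerivAt_comp_norm hx).smul (hasFDerivAt_id x)

theorem weighted_pFlux_comp_norm [CompleteSpace E] {u : ℝ → ℝ} {u' μ p : ℝ}
    (hu : HasDerivAt u u' ‖x‖) (hu' : u' ≤ 0) (hp : p ≠ 1) (hx : x ≠ 0) :
    (‖x‖ ^ (-μ) * ‖gradient (fun y ↦ u ‖y‖) x‖ ^ (p - 2)) • gradient (fun y ↦ u ‖y‖) x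
      = (-(‖x‖ ^ (-μ - 1) * (-u') ^ (p - 1))) • x := by
  have ht : 0 < ‖x‖ := norm_pos_iff.2 hx
  rw [(hu.hasGradientAt_comp_norm hx).gradient, norm_smul, smul_smul, norm_div, norm_norm,
    div_mul_cancel₀ _ ht.ne', Real.norm_eq_abs, abs_of_nonpos hu']
  congr 1
  rw [rpow_sub_one ht.ne', show p - 1 = p - 2 + 1 by ring, rpow_add' (neg_nonneg.2 hu')
    (by contrapose! hp; linarith), rpow_one]
  field_simp

end Radial

section Divergence

variable {n : ℕ}

noncomputable def divergence (V : EuclideanSpace ℝ (Fin n) → EuclideanSpace ℝ (Fin n))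
    (x : EuclideanSpace ℝ (Fin n)) : ℝ :=
  ∑ i, fderiv ℝ V x (EuclideanSpace.single i 1) i

theorem Filter.EventuallyEq.divergence_eq
    {V W : EuclideanSpace ℝ (Fin n) → EuclideanSpace ℝ (Fin n)} {x : EuclideanSpace ℝ (Fin n)} (h : V =ᶠ[𝓝 x] W) : divergence V x = divergence W x := by
  rw [divergence, divergence, h.fderiv_eq]

theorem divergence_smul_comp_norm {g : ℝ → ℝ} {g' : ℝ} {x : EuclideanSpace ℝ (Fin n)}
    (hg : HasDerivAt g g' ‖x‖) (hx : x ≠ 0) :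
    divergence (fun y ↦ g ‖y‖ • y) x = n * g ‖x‖ + ‖x‖ * g' := by
  have hnorm : ∑ i, x i * x i = ‖x‖ ^ 2 := by
    rw [EuclideanSpace.norm_sq_eq]
    simp only [Real.norm_eq_abs, sq_abs, ← sq]
  rw [divergence, (hg.hasFDerivAt_smul_comp_norm hx).fderiv]
  simp only [add_apply, smul_apply, ContinuousLinearMap.id_apply,
    ContinuousLinearMap.smulRight_apply, coe_innerSL_apply, EuclideanSpace.inner_single_right, PiLp.add_apply, PiLp.smul_apply, PiLp.single_eq_same,
    smul_eq_mul, ringHom_apply, one_mul, mul_one, mul_assoc, Finset.sum_add_distrib,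
    Finset.sum_const, Finset.card_univ, Fintype.card_fin, nsmul_eq_mul, ← Finset.mul_sum, hnorm]
  field_simp

end Divergence

section Profile

variable {t : ℝ}

theorem hasDerivAt_rpow_mul_one_add_rpow (σ a e : ℝ) (ht : 0 < t) :
    HasDerivAt (fun t ↦ t ^ σ * (1 + t ^ a) ^ e)
      (t ^ (σ - 1) * (1 + t ^ a) ^ (e - 1) * (σ * (1 + t ^ a) + e * a * t ^ a)) t := by
  have hQ : 0 < 1 + t ^ a := by positivity
  have h := (hasDerivAt_rpow_const (p := σ) (Or.inl ht.ne')).mul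
    (((hasDerivAt_rpow_const (p := a) (Or.inl ht.ne')).const_add 1).rpow_const (p := e)
      (Or.inl hQ.ne'))
  refine h.congr_deriv ?_
  rw [rpow_sub_one ht.ne', rpow_sub_one ht.ne', rpow_sub_one hQ.ne']
  field_simp

theorem hasDerivAt_bubble (C a b : ℝ) (ht : 0 < t) :
    HasDerivAt (fun t ↦ C * (1 + t ^ a) ^ (-b))
      (-(C * a * b * (t ^ (a - 1) * (1 + t ^ a) ^ (-b - 1)))) t := by
  have hQ : 0 < 1 + t ^ a := by positivity
  refine ((((hasDerivAt_rpow_const (p := a) (Or.inl ht.ne')).const_add 1).rpow_const (p := -b)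
      (Or.inl hQ.ne')).const_mul C).congr_deriv ?_
  ring

theorem bubble_flux {C a b p μ s : ℝ} (hCab : 0 ≤ C * a * b) (hap : a * (p - 1) = p - s + μ)
    (ht : 0 < t) :
    t ^ (-μ - 1) * (C * a * b * (t ^ (a - 1) * (1 + t ^ a) ^ (-b - 1))) ^ (p - 1)
      = (C * a * b) ^ (p - 1) * (t ^ (-s) * (1 + t ^ a) ^ ((-b - 1) * (p - 1))) := by
  have hQ : 0 < 1 + t ^ a := by positivity
  have hexp : t ^ (-μ - 1) * t ^ ((a - 1) * (p - 1)) = t ^ (-s) := by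
    rw [← rpow_add ht]
    congr 1
    linear_combination hap
  rw [mul_rpow (x := C * a * b) hCab (by positivity),
    mul_rpow (rpow_nonneg ht.le _) (rpow_nonneg hQ.le _), ← rpow_mul ht.le, ← rpow_mul hQ.le,
    ← hexp]
  ring

end Profile

section Bubble

variable {n : ℕ} {x : EuclideanSpace ℝ (Fin n)}

theorem divergence_smul_rpow_mul_one_add_rpow (K σ a e : ℝ) (hea : e * a = -(n + σ))
    (hx : x ≠ 0) :
    divergence (fun y ↦ (K * (‖y‖ ^ σ * (1 + ‖y‖ ^ a) ^ e)) • y) x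
      = K * (n + σ) * (‖x‖ ^ σ * (1 + ‖x‖ ^ a) ^ (e - 1)) := by
  have ht : 0 < ‖x‖ := norm_pos_iff.2 hx
  have hQ : 0 < 1 + ‖x‖ ^ a := by positivity
  rw [divergence_smul_comp_norm ((hasDerivAt_rpow_mul_one_add_rpow σ a e ht).const_mul K) hx,
    rpow_sub_one ht.ne', rpow_sub_one hQ.ne']
  field_simp
  linear_combination K * ‖x‖ ^ a * hea

theorem bubble_weighted_pLaplacian {C a b p μ s : ℝ} (hCab : 0 ≤ C * a * b) (hp : 1 < p)
    (hap : a * (p - 1) = p - s + μ) (hb : b * (p - s + μ) = n - p - μ) (hx : x ≠ 0) :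
    let U : EuclideanSpace ℝ (Fin n) → ℝ := fun y ↦ C * (1 + ‖y‖ ^ a) ^ (-b)
    let V : EuclideanSpace ℝ (Fin n) → EuclideanSpace ℝ (Fin n) := fun y ↦
      (‖y‖ ^ (-μ) * ‖gradient U y‖ ^ (p - 2)) • gradient U y
    DifferentiableAt ℝ V x ∧ -divergence V x = (C * a * b) ^ (p - 1) * (n - s) *
      (‖x‖ ^ (-s) * (1 + ‖x‖ ^ a) ^ ((-b - 1) * (p - 1) - 1)) := by
  intro U V
  have hV : ∀ y ≠ 0,
      V y = (-(C * a * b) ^ (p - 1) * (‖y‖ ^ (-s) * (1 + ‖y‖ ^ a) ^ ((-b - 1) * (p - 1)))) • y := by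
    intro y hy
    have ht := norm_pos_iff.2 hy
    have hu' : -(C * a * b * (‖y‖ ^ (a - 1) * (1 + ‖y‖ ^ a) ^ (-b - 1))) ≤ 0 :=
      neg_nonpos.2 (mul_nonneg hCab (by positivity))
    have h := weighted_pFlux_comp_norm (μ := μ) (hasDerivAt_bubble C a b ht) hu' hp.ne' hy
    rwa [neg_neg, bubble_flux hCab hap ht, ← neg_mul] at h
  have hVx : V =ᶠ[𝓝 x] _ := (eventually_ne_nhds hx).mono hV
  have hea : (-b - 1) * (p - 1) * a = -(n + -s) := by linear_combination (-b - 1) * hap - hb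
  refine ⟨hVx.differentiableAt_iff.2 ?_, ?_⟩
  · exact ((hasDerivAt_rpow_mul_one_add_rpow _ _ _ (norm_pos_iff.2 hx)).const_mul _
      |>.hasFDerivAt_smul_comp_norm hx).differentiableAt
  · rw [hVx.divergence_eq, divergence_smul_rpow_mul_one_add_rpow _ _ _ _ hea hx]
    ring

end Bubble

theorem ckn_bubble_rpow {N p μ s a b C : ℝ} (hp : 1 < p) (hpμN : p + μ < N)
    (hpsμ : 0 < p - s + μ) (ha : a = (p - s + μ) / (p - 1)) (hb : b = (N - p - μ) / (p - s + μ))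
    (hC : C = ((N - s) * ((N - p - μ) / (p - 1)) ^ (p - 1)) ^ ((N - p - μ) / (p * (p - s + μ))))
    {t : ℝ} (ht : 0 ≤ t) :
    (C * (1 + t ^ a) ^ (-b)) ^ (p * (N - s) / (N - p - μ) - 1)
      = (C * a * b) ^ (p - 1) * (N - s) * (1 + t ^ a) ^ ((-b - 1) * (p - 1) - 1) := by
  have hp1 : p - 1 ≠ 0 := by linarith
  have hNpμ : N - p - μ ≠ 0 := by linarith
  have hB : 0 < (N - s) * ((N - p - μ) / (p - 1)) ^ (p - 1) :=
    mul_pos (by linarith) (rpow_pos_of_pos (div_pos (by linarith) (by linarith)) _)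
  have hCpos : 0 < C := hC ▸ rpow_pos_of_pos hB _
  have hab : a * b = (N - p - μ) / (p - 1) := by
    subst ha hb
    field_simp
  have hCr : C ^ (p * (N - s) / (N - p - μ) - p) = (N - s) * ((N - p - μ) / (p - 1)) ^ (p - 1) := by
    rw [hC, ← rpow_mul hB.le]
    convert rpow_one _
    field_simp
    ring
  have hexp : -b * (p * (N - s) / (N - p - μ) - 1) = (-b - 1) * (p - 1) - 1 := by
    subst hb
    field_simp
    ring
  have hQ : 0 ≤ 1 + t ^ a := by positivity
  rw [mul_rpow hCpos.le (rpow_nonneg hQ _), ← rpow_mul hQ, hexp, mul_assoc C, hab,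
    mul_rpow hCpos.le (div_pos (by linarith) (by linarith)).le,
    show p * (N - s) / (N - p - μ) - 1 = (p - 1) + (p * (N - s) / (N - p - μ) - p) by ring,
    rpow_add hCpos, hCr]
  ring

theorem ckn_extremal_solves_general (N : ℕ) (p μ s : ℝ)
    (hp : 1 < p) (hpμN : p + μ < (N : ℝ))
    (hpsμ : 0 < p - s + μ) :
    let r : ℝ := p * ((N : ℝ) - s) / ((N : ℝ) - p - μ)
    let C : ℝ := (((N : ℝ) - s) * (((N : ℝ) - p - μ) / (p - 1)) ^ (p - 1))
      ^ (((N : ℝ) - p - μ) / (p * (p - s + μ)))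
    let U : EuclideanSpace ℝ (Fin N) → ℝ := fun x =>
      C * (1 + ‖x‖ ^ ((p - s + μ) / (p - 1))) ^ (-(((N : ℝ) - p - μ) / (p - s + μ)))
    let V : EuclideanSpace ℝ (Fin N) → EuclideanSpace ℝ (Fin N) := fun x =>
      (‖x‖ ^ (-μ) * ‖gradient U x‖ ^ (p - 2)) • gradient U x
    ∀ x : EuclideanSpace ℝ (Fin N), x ≠ 0 →
      0 < U x ∧ DifferentiableAt ℝ V x ∧
      -(∑ i : Fin N, (fderiv ℝ V x (EuclideanSpace.single i 1)) i)
        = ‖x‖ ^ (-s) * (U x) ^ (r - 1) := by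
  intro r C U V x hx
  have hp1 : 0 < p - 1 := by linarith
  have hNpμ : 0 < (N : ℝ) - p - μ := by linarith
  have hC : 0 < C :=
    rpow_pos_of_pos (mul_pos (by linarith) (rpow_pos_of_pos (div_pos hNpμ hp1) _)) _
  have ha : 0 < (p - s + μ) / (p - 1) := div_pos hpsμ hp1
  have hb : 0 < ((N : ℝ) - p - μ) / (p - s + μ) := div_pos hNpμ hpsμ
  obtain ⟨hdiff, hdiv⟩ := bubble_weighted_pLaplacian (μ := μ) (s := s)
    (mul_pos (mul_pos hC ha) hb).le hp (div_mul_cancel₀ _ hp1.ne') (div_mul_cancel₀ _ hpsμ.ne') hx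
  refine ⟨by positivity, hdiff, hdiv.trans ?_⟩
  rw [show U x ^ (r - 1) = _ from ckn_bubble_rpow hp hpμN hpsμ rfl rfl rfl (norm_nonneg x)]
  ring

theorem ckn_extremal_solves (N : ℕ) (p μ s : ℝ)
    (hN : 2 ≤ N) (hp : 1 < p) (hμ : 0 < μ) (hpμN : p + μ < (N : ℝ))
    (hpsμ : 0 < p - s + μ) :
    let r : ℝ := p * ((N : ℝ) - s) / ((N : ℝ) - p - μ)
    let C : ℝ := (((N : ℝ) - s) * (((N : ℝ) - p - μ) / (p - 1)) ^ (p - 1))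
      ^ (((N : ℝ) - p - μ) / (p * (p - s + μ)))
    let U : EuclideanSpace ℝ (Fin N) → ℝ := fun x =>
      C * (1 + ‖x‖ ^ ((p - s + μ) / (p - 1))) ^ (-(((N : ℝ) - p - μ) / (p - s + μ)))
    let V : EuclideanSpace ℝ (Fin N) → EuclideanSpace ℝ (Fin N) := fun x =>
      (‖x‖ ^ (-μ) * ‖gradient U x‖ ^ (p - 2)) • gradient U x
    ∀ x : EuclideanSpace ℝ (Fin N), x ≠ 0 →
      0 < U x ∧ DifferentiableAt ℝ V x ∧
      -(∑ i : Fin N, (fderiv ℝ V x (EuclideanSpace.single i 1)) i)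
        = ‖x‖ ^ (-s) * (U x) ^ (r - 1) :=
  ckn_extremal_solves_general N p μ s hp hpμN hpsμ
end
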